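/- arXiv:2001.10512 — 9 statements merged into one kernel-verified Lean document; each statement's English description precedes it below -/
import Mathlib

section
/- Rule get-read preserves the security condition: let b : Set (S × O × A), f1 : S → ℕ, f2 : O → ℕ, f3 : S → Set K, f4 : O → Set K, and suppose the state (b, f1, f2, f3, f4) satisfies the security condition. If s : S and o : O satisfy f2 o ≤ f1 s and f4 o ⊆ f3 s, then the state (b ∪ {(s, o, r)}, f1, f2, f3, f4) also satisfies the security condition. -/
/-- The state `(b, f1, f2, f3, f4)` satisfies the security condition. -/
def SecCond {S O K A : Type*} (r w e a c : A) (b : Set (S × O × A))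
    (f1 : S → ℕ) (f2 : O → ℕ) (f3 : S → Set K) (f4 : O → Set K) : Prop :=
  ∀ s o x, (s, o, x) ∈ b →
    x = e ∨ x = a ∨ x = c ∨ ((x = r ∨ x = w) ∧ f2 o ≤ f1 s ∧ f4 o ⊆ f3 s)

section SecCond

variable {S O K A : Type*} {r w e a c : A}
  {f1 : S → ℕ} {f2 : O → ℕ} {f3 : S → Set K} {f4 : O → Set K}

theorem secCond_union {b b' : Set (S × O × A)} :
    SecCond r w e a c (b ∪ b') f1 f2 f3 f4 ↔
      SecCond r w e a c b f1 f2 f3 f4 ∧ SecCond r w e a c b' f1 f2 f3 f4 := by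
  simp only [SecCond, Set.mem_union, or_imp, forall_and]

theorem secCond_singleton {s : S} {o : O} {x : A} :
    SecCond r w e a c {(s, o, x)} f1 f2 f3 f4 ↔
      x = e ∨ x = a ∨ x = c ∨ ((x = r ∨ x = w) ∧ f2 o ≤ f1 s ∧ f4 o ⊆ f3 s) := by
  simp only [SecCond, Set.mem_singleton_iff, Prod.mk.injEq]
  constructor
  · exact fun h => h s o x ⟨rfl, rfl, rfl⟩
  · rintro h _ _ _ ⟨rfl, rfl, rfl⟩
    exact h

theorem secCond_singleton_read {s : S} {o : O} (h1 : f2 o ≤ f1 s) (h2 : f4 o ⊆ f3 s) :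
    SecCond r w e a c {(s, o, r)} f1 f2 f3 f4 :=
  secCond_singleton.2 (.inr (.inr (.inr ⟨.inl rfl, h1, h2⟩)))

end SecCond

theorem getRead_preserves_secCond_general {S O K A : Type*} (r w e a c : A)
    (b : Set (S × O × A)) (f1 : S → ℕ) (f2 : O → ℕ) (f3 : S → Set K) (f4 : O → Set K)
    (hsec : SecCond r w e a c b f1 f2 f3 f4)
    (s : S) (o : O) (h1 : f2 o ≤ f1 s) (h2 : f4 o ⊆ f3 s) :
    SecCond r w e a c (b ∪ {(s, o, r)}) f1 f2 f3 f4 :=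
  secCond_union.2 ⟨hsec, secCond_singleton_read h1 h2⟩

/-- Rule get-read preserves the security condition. -/
theorem getRead_preserves_secCond {S O K A : Type*} (r w e a c : A)
    (hdist : ([r, w, e, a, c] : List A).Pairwise (· ≠ ·))
    (b : Set (S × O × A)) (f1 : S → ℕ) (f2 : O → ℕ) (f3 : S → Set K) (f4 : O → Set K)
    (hsec : SecCond r w e a c b f1 f2 f3 f4)
    (s : S) (o : O) (h1 : f2 o ≤ f1 s) (h2 : f4 o ⊆ f3 s) :
    SecCond r w e a c (b ∪ {(s, o, r)}) f1 f2 f3 f4 :=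
  getRead_preserves_secCond_general r w e a c b f1 f2 f3 f4 hsec s o h1 h2
end

section
/- Rule get-read preserves the *-property: let b : Set (S × O × A), f2 : O → ℕ, f4 : O → Set K, and suppose the state (b, f2, f4) satisfies the *-property. Let s : S and o : O be such that for every object q with (s, q, w) ∈ b or (s, q, a) ∈ b, one has f2 o ≤ f2 q and f4 o ⊆ f4 q. Then the state (b ∪ {(s, o, r)}, f2, f4) also satisfies the *-property. -/
/-- The state `(b, f2, f4)` satisfies the *-property. -/
def StarProp {S O K A : Type*} (r w a : A) (b : Set (S × O × A))
    (f2 : O → ℕ) (f4 : O → Set K) : Prop :=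
  ∀ (s : S) (o1 o2 : O),
    ((s, o1, w) ∈ b ∨ (s, o1, a) ∈ b) → ((s, o2, r) ∈ b ∨ (s, o2, w) ∈ b) →
    f2 o2 ≤ f2 o1 ∧ f4 o2 ⊆ f4 o1

theorem mem_union_singleton_of_access_ne {S O A : Type*} {b : Set (S × O × A)} {s s' : S}
    {o o' : O} {x y : A} (hxy : x ≠ y) : (s', o', x) ∈ b ∪ {(s, o, y)} ↔ (s', o', x) ∈ b := by
  simp [hxy]

theorem StarProp.union_read {S O K A : Type*} {r w a : A} (hwr : w ≠ r) (har : a ≠ r)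
    {b : Set (S × O × A)} {f2 : O → ℕ} {f4 : O → Set K} (hstar : StarProp r w a b f2 f4)
    {s : S} {o : O}
    (h : ∀ q : O, ((s, q, w) ∈ b ∨ (s, q, a) ∈ b) → f2 o ≤ f2 q ∧ f4 o ⊆ f4 q) :
    StarProp r w a (b ∪ {(s, o, r)}) f2 f4 := by
  intro s' o1 o2 hwa hrw
  rw [mem_union_singleton_of_access_ne hwr, mem_union_singleton_of_access_ne har] at hwa
  rw [mem_union_singleton_of_access_ne hwr] at hrw
  rcases hrw with (hread | ⟨⟨rfl, rfl, -⟩⟩) | hwrite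
  · exact hstar s' o1 o2 hwa (Or.inl hread)
  · exact h o1 hwa
  · exact hstar s' o1 o2 hwa (Or.inr hwrite)

/-- Rule get-read preserves the *-property. -/
theorem getRead_preserves_starProp {S O K A : Type*} (r w e a c : A)
    (hdist : ([r, w, e, a, c] : List A).Pairwise (· ≠ ·))
    (b : Set (S × O × A)) (f2 : O → ℕ) (f4 : O → Set K)
    (hstar : StarProp r w a b f2 f4)
    (s : S) (o : O)
    (h : ∀ q : O, ((s, q, w) ∈ b ∨ (s, q, a) ∈ b) → f2 o ≤ f2 q ∧ f4 o ⊆ f4 q) :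
    StarProp r w a (b ∪ {(s, o, r)}) f2 f4 := by
  have hr : ∀ x ∈ [w, e, a, c], r ≠ x := (List.pairwise_cons.mp hdist).1
  exact hstar.union_read (hr w (by simp)).symm (hr a (by simp)).symm h
end

section
/- Rule get-write preserves the *-property: let b : Set (S × O × A), f2 : O → ℕ, f4 : O → Set K, and suppose the state (b, f2, f4) satisfies the *-property. Let s : S and o : O be such that: (i) for every q with (s, q, r) ∈ b, f2 q ≤ f2 o and f4 q ⊆ f4 o; (ii) for every q with (s, q, a) ∈ b, f2 o ≤ f2 q and f4 o ⊆ f4 q; and (iii) for every q with (s, q, w) ∈ b, f2 o = f2 q and f4 o = f4 q. Then the state (b ∪ {(s, o, w)}, f2, f4) also satisfies the *-property. -/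
section StarProp

variable {S O K A : Type*} {r w a : A} {b : Set (S × O × A)} {f2 : O → ℕ} {f4 : O → Set K}
  {s s' : S} {o o' : O}

theorem mem_or_mem_union_singleton {x y z : A}
    (h : (s', o', x) ∈ b ∪ {(s, o, z)} ∨ (s', o', y) ∈ b ∪ {(s, o, z)}) :
    ((s', o', x) ∈ b ∨ (s', o', y) ∈ b) ∨ (s' = s ∧ o' = o) := by
  simp only [Set.mem_union, Set.mem_singleton_iff, Prod.mk.injEq] at h
  tauto

theorem StarProp.union_write (hstar : StarProp r w a b f2 f4)
    (hread : ∀ q, (s, q, r) ∈ b ∨ (s, q, w) ∈ b → f2 q ≤ f2 o ∧ f4 q ⊆ f4 o)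
    (hwrite : ∀ q, (s, q, w) ∈ b ∨ (s, q, a) ∈ b → f2 o ≤ f2 q ∧ f4 o ⊆ f4 q) :
    StarProp r w a (b ∪ {(s, o, w)}) f2 f4 := by
  intro s' o1 o2 h1 h2
  rcases mem_or_mem_union_singleton h1 with hb1 | ⟨rfl, rfl⟩
  · rcases mem_or_mem_union_singleton h2 with hb2 | ⟨rfl, rfl⟩
    · exact hstar s' o1 o2 hb1 hb2
    · exact hwrite o1 hb1
  · rcases mem_or_mem_union_singleton h2 with hb2 | ⟨-, rfl⟩
    · exact hread o2 hb2
    · exact ⟨le_rfl, subset_rfl⟩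

end StarProp

theorem getWrite_preserves_starProp_general {S O K A : Type*} (r w a : A)
    (b : Set (S × O × A)) (f2 : O → ℕ) (f4 : O → Set K)
    (hstar : StarProp r w a b f2 f4)
    (s : S) (o : O)
    (hr : ∀ q : O, (s, q, r) ∈ b → f2 q ≤ f2 o ∧ f4 q ⊆ f4 o)
    (ha : ∀ q : O, (s, q, a) ∈ b → f2 o ≤ f2 q ∧ f4 o ⊆ f4 q)
    (hw : ∀ q : O, (s, q, w) ∈ b → f2 o = f2 q ∧ f4 o = f4 q) :
    StarProp r w a (b ∪ {(s, o, w)}) f2 f4 := by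
  refine hstar.union_write ?_ ?_
  · rintro q (hq | hq)
    · exact hr q hq
    · exact ⟨(hw q hq).1.ge, (hw q hq).2.ge⟩
  · rintro q (hq | hq)
    · exact ⟨(hw q hq).1.le, (hw q hq).2.le⟩
    · exact ha q hq

/-- Rule get-write preserves the *-property. -/
theorem getWrite_preserves_starProp {S O K A : Type*} (r w e a c : A)
    (hdist : ([r, w, e, a, c] : List A).Pairwise (· ≠ ·))
    (b : Set (S × O × A)) (f2 : O → ℕ) (f4 : O → Set K)
    (hstar : StarProp r w a b f2 f4)
    (s : S) (o : O)
    (hr : ∀ q : O, (s, q, r) ∈ b → f2 q ≤ f2 o ∧ f4 q ⊆ f4 o)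
    (ha : ∀ q : O, (s, q, a) ∈ b → f2 o ≤ f2 q ∧ f4 o ⊆ f4 q)
    (hw : ∀ q : O, (s, q, w) ∈ b → f2 o = f2 q ∧ f4 o = f4 q) :
    StarProp r w a (b ∪ {(s, o, w)}) f2 f4 :=
  getWrite_preserves_starProp_general r w a b f2 f4 hstar s o hr ha hw
end

section
/- Rule get-append preserves the *-property: let b : Set (S × O × A), f2 : O → ℕ, f4 : O → Set K, and suppose the state (b, f2, f4) satisfies the *-property. Let s : S and o : O be such that for every object q with (s, q, r) ∈ b or (s, q, w) ∈ b, one has f2 q ≤ f2 o and f4 q ⊆ f4 o. Then the state (b ∪ {(s, o, a)}, f2, f4) also satisfies the *-property. -/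
section AppendRight

variable {S O K A : Type*} {r w a : A} {b : Set (S × O × A)} {s : S} {o : O}

theorem readOrWrite_mem_union_append_iff (hra : r ≠ a) (hwa : w ≠ a) (s' : S) (q : O) :
    ((s', q, r) ∈ b ∪ {(s, o, a)} ∨ (s', q, w) ∈ b ∪ {(s, o, a)}) ↔
      ((s', q, r) ∈ b ∨ (s', q, w) ∈ b) := by
  simp [hra, hwa]

theorem writeOrAppend_mem_union_append {s' : S} {q : O}
    (hq : (s', q, w) ∈ b ∪ {(s, o, a)} ∨ (s', q, a) ∈ b ∪ {(s, o, a)}) :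
    ((s', q, w) ∈ b ∨ (s', q, a) ∈ b) ∨ (s' = s ∧ q = o) := by
  simp only [Set.mem_union, Set.mem_singleton_iff, Prod.mk.injEq] at hq
  tauto

theorem StarProp.union_append {f2 : O → ℕ} {f4 : O → Set K} (hra : r ≠ a) (hwa : w ≠ a)
    (hstar : StarProp r w a b f2 f4)
    (h : ∀ q : O, ((s, q, r) ∈ b ∨ (s, q, w) ∈ b) → f2 q ≤ f2 o ∧ f4 q ⊆ f4 o) :
    StarProp r w a (b ∪ {(s, o, a)}) f2 f4 := by
  intro s' o1 o2 h1 h2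
  rw [readOrWrite_mem_union_append_iff hra hwa] at h2
  rcases writeOrAppend_mem_union_append h1 with h1 | ⟨rfl, rfl⟩
  · exact hstar s' o1 o2 h1 h2
  · exact h o2 h2

end AppendRight

/-- Rule get-append preserves the *-property. -/
theorem getAppend_preserves_starProp {S O K A : Type*} (r w e a c : A)
    (hdist : ([r, w, e, a, c] : List A).Pairwise (· ≠ ·))
    (b : Set (S × O × A)) (f2 : O → ℕ) (f4 : O → Set K)
    (hstar : StarProp r w a b f2 f4)
    (s : S) (o : O)
    (h : ∀ q : O, ((s, q, r) ∈ b ∨ (s, q, w) ∈ b) → f2 q ≤ f2 o ∧ f4 q ⊆ f4 o) :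
    StarProp r w a (b ∪ {(s, o, a)}) f2 f4 := by
  have hra : r ≠ a := List.rel_of_pairwise_cons hdist (by simp)
  have hwa : w ≠ a := List.rel_of_pairwise_cons (List.Pairwise.of_cons hdist) (by simp)
  exact hstar.union_append hra hwa h
end

section
/- Rule get-execute preserves the *-property: let b : Set (S × O × A), f2 : O → ℕ, f4 : O → Set K, and suppose the state (b, f2, f4) satisfies the *-property. Then for any s : S and o : O, the state (b ∪ {(s, o, e)}, f2, f4) also satisfies the *-property. -/
section

variable {S O K A : Type*} {r w a : A} {f2 : O → ℕ} {f4 : O → Set K}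

theorem StarProp.of_forall_mem {b b' : Set (S × O × A)}
    (hb : ∀ t ∈ b', t.2.2 = r ∨ t.2.2 = w ∨ t.2.2 = a → t ∈ b)
    (h : StarProp r w a b f2 f4) : StarProp r w a b' f2 f4 :=
  fun s o1 o2 h1 h2 => h s o1 o2
    (h1.imp (hb _ · (by simp)) (hb _ · (by simp)))
    (h2.imp (hb _ · (by simp)) (hb _ · (by simp)))

theorem StarProp.union_singleton {x : A} (hr : x ≠ r) (hw : x ≠ w) (ha : x ≠ a)
    {b : Set (S × O × A)} (h : StarProp r w a b f2 f4) (s : S) (o : O) :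
    StarProp r w a (b ∪ {(s, o, x)}) f2 f4 := by
  refine h.of_forall_mem fun t ht hmode => ht.resolve_right ?_
  rintro rfl
  exact hmode.elim hr fun h' => h'.elim hw ha

end

/-- Rule get-execute preserves the *-property. -/
theorem getExecute_preserves_starProp {S O K A : Type*} (r w e a c : A)
    (hdist : ([r, w, e, a, c] : List A).Pairwise (· ≠ ·))
    (b : Set (S × O × A)) (f2 : O → ℕ) (f4 : O → Set K)
    (hstar : StarProp r w a b f2 f4)
    (s : S) (o : O) :
    StarProp r w a (b ∪ {(s, o, e)}) f2 f4 := by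
  simp only [List.pairwise_cons, List.mem_cons, List.not_mem_nil, or_false,
    forall_eq_or_imp, forall_eq] at hdist
  obtain ⟨⟨-, hre, -⟩, ⟨hwe, -⟩, ⟨hea, -⟩, -⟩ := hdist
  exact hstar.union_singleton hre.symm hwe.symm hea s o
end

section
/- The release, rescind and delete-object rules preserve the *-property: let b b' : Set (S × O × A) with b' ⊆ b, and let f2 : O → ℕ, f4 : O → Set K. If the state (b, f2, f4) satisfies the *-property, then the state (b', f2, f4) also satisfies the *-property. -/
theorem subset_preserves_starProp_general {S O K A : Type*} (r w a : A)
    (b b' : Set (S × O × A)) (hsub : b' ⊆ b)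
    (f2 : O → ℕ) (f4 : O → Set K)
    (hstar : StarProp r w a b f2 f4) :
    StarProp r w a b' f2 f4 :=
  fun s o1 o2 hwrite hread =>
    hstar s o1 o2 (hwrite.imp (@hsub _) (@hsub _)) (hread.imp (@hsub _) (@hsub _))

/-- The release, rescind and delete-object rules preserve the *-property:
the *-property is preserved when the access set shrinks. -/
theorem subset_preserves_starProp {S O K A : Type*} (r w e a c : A)
    (hdist : ([r, w, e, a, c] : List A).Pairwise (· ≠ ·))
    (b b' : Set (S × O × A)) (hsub : b' ⊆ b)
    (f2 : O → ℕ) (f4 : O → Set K)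
    (hstar : StarProp r w a b f2 f4) :
    StarProp r w a b' f2 f4 :=
  subset_preserves_starProp_general r w a b b' hsub f2 f4 hstar
end

section
/- Rules create-object and change-f preserve the security condition: let b : Set (S × O × A), f1 : S → ℕ, f2 : O → ℕ, f3 : S → Set K, f4 : O → Set K, and suppose the state (b, f1, f2, f3, f4) satisfies the security condition. Let o* : O be an object that does not occur in b, i.e., for all s : S, x : A, (s, o*, x) ∉ b. Then for any n : ℕ and c : Set K, the state (b, f1, Function.update f2 o* n, f3, Function.update f4 o* c) also satisfies the security condition. -/
theorem SecCond.of_eq_on_accessed {S O K A : Type*} {r w e a c : A} {b : Set (S × O × A)}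
    {f1 : S → ℕ} {f2 f2' : O → ℕ} {f3 : S → Set K} {f4 f4' : O → Set K}
    (hsec : SecCond r w e a c b f1 f2 f3 f4)
    (heq : ∀ s o x, (s, o, x) ∈ b → f2' o = f2 o ∧ f4' o = f4 o) :
    SecCond r w e a c b f1 f2' f3 f4' := by
  intro s o x hmem
  obtain ⟨h2, h4⟩ := heq s o x hmem
  rw [h2, h4]
  exact hsec s o x hmem

theorem createObject_changeF_preserves_secCond_general {S O K A : Type*} [DecidableEq O]
    (r w e a c : A)
    (b : Set (S × O × A)) (f1 : S → ℕ) (f2 : O → ℕ) (f3 : S → Set K) (f4 : O → Set K)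
    (hsec : SecCond r w e a c b f1 f2 f3 f4)
    (oStar : O) (hfresh : ∀ (s : S) (x : A), (s, oStar, x) ∉ b)
    (n : ℕ) (cl : Set K) :
    SecCond r w e a c b f1 (Function.update f2 oStar n) f3 (Function.update f4 oStar cl) := by
  refine hsec.of_eq_on_accessed fun s o x hmem => ?_
  have ho : o ≠ oStar := fun h => hfresh s x (h ▸ hmem)
  exact ⟨Function.update_of_ne ho _ _, Function.update_of_ne ho _ _⟩

/-- Rules create-object and change-f preserve the security condition. -/
theorem createObject_changeF_preserves_secCond {S O K A : Type*} [DecidableEq O]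
    (r w e a c : A)
    (hdist : ([r, w, e, a, c] : List A).Pairwise (· ≠ ·))
    (b : Set (S × O × A)) (f1 : S → ℕ) (f2 : O → ℕ) (f3 : S → Set K) (f4 : O → Set K)
    (hsec : SecCond r w e a c b f1 f2 f3 f4)
    (oStar : O) (hfresh : ∀ (s : S) (x : A), (s, oStar, x) ∉ b)
    (n : ℕ) (cl : Set K) :
    SecCond r w e a c b f1 (Function.update f2 oStar n) f3 (Function.update f4 oStar cl) :=
  createObject_changeF_preserves_secCond_general r w e a c b f1 f2 f3 f4 hsec oStar hfresh n cl
end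

section
/- Rules create-object and change-f preserve the *-property: let b : Set (S × O × A), f2 : O → ℕ, f4 : O → Set K, and suppose the state (b, f2, f4) satisfies the *-property. Let o* : O be an object that does not occur in b, i.e., for all s : S, x : A, (s, o*, x) ∉ b. Then for any n : ℕ and c : Set K, the state (b, Function.update f2 o* n, Function.update f4 o* c) also satisfies the *-property. -/
theorem StarProp.congr_of_mem {S O K A : Type*} {r w a : A} {b : Set (S × O × A)}
    {f2 g2 : O → ℕ} {f4 g4 : O → Set K} (hstar : StarProp r w a b f2 f4)
    (hf : ∀ s o x, (s, o, x) ∈ b → g2 o = f2 o ∧ g4 o = f4 o) :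
    StarProp r w a b g2 g4 := by
  intro s o1 o2 h1 h2
  obtain ⟨h21, h41⟩ : g2 o1 = f2 o1 ∧ g4 o1 = f4 o1 := by
    rcases h1 with h | h <;> exact hf s o1 _ h
  obtain ⟨h22, h42⟩ : g2 o2 = f2 o2 ∧ g4 o2 = f4 o2 := by
    rcases h2 with h | h <;> exact hf s o2 _ h
  rw [h21, h41, h22, h42]
  exact hstar s o1 o2 h1 h2

theorem createObject_changeF_preserves_starProp_general {S O K A : Type*} [DecidableEq O]
    (r w a : A)
    (b : Set (S × O × A)) (f2 : O → ℕ) (f4 : O → Set K)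
    (hstar : StarProp r w a b f2 f4)
    (oStar : O) (hfresh : ∀ (s : S) (x : A), (s, oStar, x) ∉ b)
    (n : ℕ) (cl : Set K) :
    StarProp r w a b (Function.update f2 oStar n) (Function.update f4 oStar cl) := by
  refine hstar.congr_of_mem fun s o x hmem => ?_
  have ho : o ≠ oStar := by
    rintro rfl
    exact hfresh s x hmem
  exact ⟨Function.update_of_ne ho n f2, Function.update_of_ne ho cl f4⟩

/-- Rules create-object and change-f preserve the *-property. -/
theorem createObject_changeF_preserves_starProp {S O K A : Type*} [DecidableEq O]
    (r w e a c : A)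
    (hdist : ([r, w, e, a, c] : List A).Pairwise (· ≠ ·))
    (b : Set (S × O × A)) (f2 : O → ℕ) (f4 : O → Set K)
    (hstar : StarProp r w a b f2 f4)
    (oStar : O) (hfresh : ∀ (s : S) (x : A), (s, oStar, x) ∉ b)
    (n : ℕ) (cl : Set K) :
    StarProp r w a b (Function.update f2 oStar n) (Function.update f4 oStar cl) :=
  createObject_changeF_preserves_starProp_general r w a b f2 f4 hstar oStar hfresh n cl
end

section
/- In the two-mode encoding of BLP, the normal clause of getWrite preserves the *-property: let Br Bw : Set (S × O) and fo : O → ℕ × Set K, and suppose the state (Br, Bw, fo) satisfies the *-property. Let s : S and o : O be such that for every (si, oi) ∈ Br with si = s, the class fo oi is dominated by fo o. Then the state (Br, Bw ∪ {(s, o)}, fo) also satisfies the *-property. -/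
/-- Security class `p` is dominated by security class `q`. -/
def Dominated {K : Type*} (p q : ℕ × Set K) : Prop :=
  p.1 ≤ q.1 ∧ p.2 ⊆ q.2

/-- The state `(Br, Bw, fo)` satisfies the *-property (two-mode encoding). -/
def StarProp2 {S O K : Type*} (Br Bw : Set (S × O)) (fo : O → ℕ × Set K) : Prop :=
  ∀ (s1 : S) (o1 : O) (s2 : S) (o2 : O),
    (s1, o1) ∈ Br → (s2, o2) ∈ Bw → s1 = s2 → Dominated (fo o1) (fo o2)

section StarProp2

variable {S O K : Type*} (Br : Set (S × O)) (fo : O → ℕ × Set K)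

theorem starProp2_union_iff (Bw₁ Bw₂ : Set (S × O)) :
    StarProp2 Br (Bw₁ ∪ Bw₂) fo ↔ StarProp2 Br Bw₁ fo ∧ StarProp2 Br Bw₂ fo := by
  constructor
  · intro hstar
    exact ⟨fun s1 o1 s2 o2 hr hw => hstar s1 o1 s2 o2 hr (Or.inl hw),
      fun s1 o1 s2 o2 hr hw => hstar s1 o1 s2 o2 hr (Or.inr hw)⟩
  · rintro ⟨hstar₁, hstar₂⟩ s1 o1 s2 o2 hr (hw | hw)
    · exact hstar₁ s1 o1 s2 o2 hr hw
    · exact hstar₂ s1 o1 s2 o2 hr hw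

theorem starProp2_singleton_iff (s : S) (o : O) :
    StarProp2 Br {(s, o)} fo ↔
      ∀ (si : S) (oi : O), (si, oi) ∈ Br → si = s → Dominated (fo oi) (fo o) := by
  constructor
  · intro hstar si oi hr hs
    exact hstar si oi s o hr rfl hs
  · rintro h s1 o1 s2 o2 hr hw rfl
    obtain ⟨rfl, rfl⟩ := Prod.mk.inj hw
    exact h s1 o1 hr rfl

end StarProp2

/-- In the two-mode encoding of BLP, the normal clause of getWrite preserves
the *-property. -/
theorem getWriteOk_preserves_starProp2 {S O K : Type*}
    (Br Bw : Set (S × O)) (fo : O → ℕ × Set K)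
    (hstar : StarProp2 Br Bw fo)
    (s : S) (o : O)
    (h : ∀ (si : S) (oi : O), (si, oi) ∈ Br → si = s → Dominated (fo oi) (fo o)) :
    StarProp2 Br (Bw ∪ {(s, o)}) fo :=
  (starProp2_union_iff Br fo Bw _).mpr ⟨hstar, (starProp2_singleton_iff Br fo s o).mpr h⟩
end
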